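/- Define h : ℝ × ℝ → ℝ by h(θ, y) = exp(4y − y²/2 + 4θ − θ²/2 − θ²y²/2). Then h is Lebesgue-integrable over ℝ², and its conditionals are the Gaussian densities N(y; 4/(1+θ²), 1/(1+θ²)) and N(θ; 4/(1+y²), 1/(1+y²)): for every θ ∈ ℝ, h(θ, y) / ∫_ℝ h(θ, y') dy' = N(y; 4/(1+θ²), 1/(1+θ²)) for all y, and for every y ∈ ℝ, h(θ, y) / ∫_ℝ h(θ', y) dθ' = N(θ; 4/(1+y²), 1/(1+y²)) for all θ. Hence the conditional families f(y|θ) = N(y; 4/(1+θ²), 1/(1+θ²)) and q(θ|y) = N(θ; 4/(1+y²), 1/(1+y²)) are compatible, with joint density proportional to h. -/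
import Mathlib


open MeasureTheory

/-- The one-dimensional Gaussian density `N(x; m, v)` with variance `v`. -/
noncomputable def gauss1 (m v x : ℝ) : ℝ :=
  (2 * Real.pi * v) ^ (-(1 : ℝ) / 2) * Real.exp (-(x - m) ^ 2 / (2 * v))

lemma int_gauss (m v : ℝ) (hv : 0 < v) :
    ∫ y : ℝ, Real.exp (-(y - m) ^ 2 / (2 * v)) = Real.sqrt (2 * Real.pi * v) := by
  have h1 : ∀ y : ℝ, Real.exp (-(y - m) ^ 2 / (2 * v))
      = (fun x : ℝ => Real.exp (-(1 / (2 * v)) * x ^ 2)) (y - m) := by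
    intro y; simp only []; congr 1; field_simp
  calc ∫ y : ℝ, Real.exp (-(y - m) ^ 2 / (2 * v))
      = ∫ y : ℝ, (fun x : ℝ => Real.exp (-(1 / (2 * v)) * x ^ 2)) (y - m) := by
        exact integral_congr_ae (Filter.Eventually.of_forall h1)
    _ = ∫ y : ℝ, Real.exp (-(1 / (2 * v)) * y ^ 2) := by
        exact integral_sub_right_eq_self (fun x : ℝ => Real.exp (-(1 / (2 * v)) * x ^ 2)) m
    _ = Real.sqrt (Real.pi / (1 / (2 * v))) := integral_gaussian _
    _ = Real.sqrt (2 * Real.pi * v) := by congr 1; field_simp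

lemma int_gauss_pos (m v : ℝ) (hv : 0 < v) :
    0 < ∫ y : ℝ, Real.exp (-(y - m) ^ 2 / (2 * v)) := by
  rw [int_gauss m v hv]
  positivity

lemma gauss1_eq (m v x : ℝ) (hv : 0 < v) :
    gauss1 m v x = Real.exp (-(x - m) ^ 2 / (2 * v)) / Real.sqrt (2 * Real.pi * v) := by
  have h2 : (0:ℝ) < 2 * Real.pi * v := by positivity
  rw [gauss1, neg_div, Real.rpow_neg h2.le, ← Real.sqrt_eq_rpow]
  ring

lemma exp_integrable : Integrable (fun x : ℝ => Real.exp (4 * x - x ^ 2 / 2)) volume := by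
  have key : ∀ x : ℝ, Real.exp (4 * x - x ^ 2 / 2)
      = Real.exp 8 * (fun t : ℝ => Real.exp (-(1/2 : ℝ) * t ^ 2)) (x - 4) := by
    intro x
    simp only []
    rw [← Real.exp_add]
    congr 1; ring
  have h1 : Integrable (fun t : ℝ => Real.exp (-(1/2 : ℝ) * t ^ 2)) volume :=
    integrable_exp_neg_mul_sq (by norm_num)
  have h2 := (h1.comp_sub_right 4).const_mul (Real.exp 8)
  exact h2.congr (Filter.Eventually.of_forall fun x => (key x).symm)

lemma hkey (θ y : ℝ) :
    Real.exp (4 * y - y ^ 2 / 2 + 4 * θ - θ ^ 2 / 2 - θ ^ 2 * y ^ 2 / 2)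
      = Real.exp (4 * θ - θ ^ 2 / 2 + 8 / (1 + θ ^ 2))
        * Real.exp (-(y - 4 / (1 + θ ^ 2)) ^ 2 / (2 * (1 / (1 + θ ^ 2)))) := by
  rw [← Real.exp_add]
  congr 1
  have h1 : (1 : ℝ) + θ ^ 2 ≠ 0 := by positivity
  field_simp
  ring

/-- The function `h(θ, y) = exp(4y − y²/2 + 4θ − θ²/2 − θ²y²/2)` is
integrable on `ℝ²` and its conditionals are the Gaussian densities
`N(y; 4/(1+θ²), 1/(1+θ²))` and `N(θ; 4/(1+y²), 1/(1+y²))`; hence these two conditional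
families are compatible, with joint density proportional to `h`. -/
theorem compatible_gaussian_conditionals
    (h : ℝ → ℝ → ℝ)
    (hdef : ∀ θ y : ℝ,
      h θ y = Real.exp (4 * y - y ^ 2 / 2 + 4 * θ - θ ^ 2 / 2 - θ ^ 2 * y ^ 2 / 2)) :
    Integrable (Function.uncurry h) (volume : Measure (ℝ × ℝ)) ∧
    (∀ θ y : ℝ, h θ y / (∫ y' : ℝ, h θ y') =
      gauss1 (4 / (1 + θ ^ 2)) (1 / (1 + θ ^ 2)) y) ∧
    (∀ y θ : ℝ, h θ y / (∫ θ' : ℝ, h θ' y) =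
      gauss1 (4 / (1 + y ^ 2)) (1 / (1 + y ^ 2)) θ) := by
  -- the main conditional computation
  have main : ∀ θ y : ℝ,
      Real.exp (4 * y - y ^ 2 / 2 + 4 * θ - θ ^ 2 / 2 - θ ^ 2 * y ^ 2 / 2) /
        (∫ y' : ℝ, Real.exp (4 * y' - y' ^ 2 / 2 + 4 * θ - θ ^ 2 / 2 - θ ^ 2 * y' ^ 2 / 2)) =
      gauss1 (4 / (1 + θ ^ 2)) (1 / (1 + θ ^ 2)) y := by
    intro θ y
    set m := 4 / (1 + θ ^ 2)
    set v := 1 / (1 + θ ^ 2) with hvdef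
    have hv : 0 < v := by rw [hvdef]; positivity
    set A := Real.exp (4 * θ - θ ^ 2 / 2 + 8 / (1 + θ ^ 2)) with hA
    have hApos : 0 < A := Real.exp_pos _
    have hint : (∫ y' : ℝ, Real.exp (4 * y' - y' ^ 2 / 2 + 4 * θ - θ ^ 2 / 2 - θ ^ 2 * y' ^ 2 / 2))
        = A * Real.sqrt (2 * Real.pi * v) := by
      calc (∫ y' : ℝ, Real.exp (4 * y' - y' ^ 2 / 2 + 4 * θ - θ ^ 2 / 2 - θ ^ 2 * y' ^ 2 / 2))
          = ∫ y' : ℝ, A * Real.exp (-(y' - m) ^ 2 / (2 * v)) :=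
            integral_congr_ae (Filter.Eventually.of_forall fun y' => hkey θ y')
        _ = A * ∫ y' : ℝ, Real.exp (-(y' - m) ^ 2 / (2 * v)) := MeasureTheory.integral_const_mul A _
        _ = A * Real.sqrt (2 * Real.pi * v) := by rw [int_gauss m v hv]
    rw [hint, hkey θ y, mul_div_mul_left _ _ hApos.ne', gauss1_eq m v y hv]
  have symm : ∀ θ y : ℝ, h θ y = h y θ := by
    intro θ y; rw [hdef, hdef]; ring_nf
  refine ⟨?_, ?_, ?_⟩
  · -- integrability
    have hg : Integrable (fun z : ℝ × ℝ =>
        Real.exp (4 * z.1 - z.1 ^ 2 / 2) * Real.exp (4 * z.2 - z.2 ^ 2 / 2))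
        (volume : Measure (ℝ × ℝ)) := by
      have := exp_integrable.mul_prod exp_integrable
      simpa [Measure.volume_eq_prod] using this
    have hmeas : AEStronglyMeasurable (Function.uncurry h) (volume : Measure (ℝ × ℝ)) := by
      have : Function.uncurry h = fun z : ℝ × ℝ =>
          Real.exp (4 * z.2 - z.2 ^ 2 / 2 + 4 * z.1 - z.1 ^ 2 / 2 - z.1 ^ 2 * z.2 ^ 2 / 2) := by
        funext z; exact hdef z.1 z.2
      rw [this]
      exact (Measurable.aestronglyMeasurable (by fun_prop))
    refine hg.mono' hmeas (Filter.Eventually.of_forall fun z => ?_)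
    rw [Function.uncurry, hdef]
    rw [Real.norm_eq_abs, abs_of_pos (Real.exp_pos _), ← Real.exp_add]
    apply Real.exp_le_exp.mpr
    nlinarith [sq_nonneg (z.1 * z.2)]
  · intro θ y
    simpa only [hdef] using main θ y
  · intro y θ
    have : h θ y / (∫ θ' : ℝ, h θ' y) = h y θ / (∫ θ' : ℝ, h y θ') := by
      rw [symm θ y]
      congr 1
      exact integral_congr_ae (Filter.Eventually.of_forall fun θ' => symm θ' y)
    rw [this]
    simpa only [hdef] using main y θ
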